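/- arXiv:1712.10145 — 2 statements merged into one kernel-verified Lean document; each statement's English description precedes it below -/
import Mathlib

section
/- Under the assumptions a₁ > a₃ > 0 and a₂ > a₄, the discriminant of the quadratic h(x) = Ax² + Bx + C with A = (a₁a₄² − a₂²a₃) + a₁a₃(a₄ − a₂), B = 2(a₁a₄ − a₂a₃), C = a₁ − a₃ satisfies B² − 4AC = 4a₁a₃(a₂ − a₄)(a₁ + a₂ − a₃ − a₄) > 0. -/
theorem discrim_eq_of_coeffs {R : Type*} [CommRing R] (a₁ a₂ a₃ a₄ : R) :
    discrim ((a₁ * a₄ ^ 2 - a₂ ^ 2 * a₃) + a₁ * a₃ * (a₄ - a₂)) (2 * (a₁ * a₄ - a₂ * a₃))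
        (a₁ - a₃) = 4 * a₁ * a₃ * (a₂ - a₄) * (a₁ + a₂ - a₃ - a₄) := by
  rw [discrim]
  ring

/-- With a₁ > a₃ > 0 and a₂ > a₄, the discriminant of
h(x) = Ax² + Bx + C, A = (a₁a₄² − a₂²a₃) + a₁a₃(a₄ − a₂), B = 2(a₁a₄ − a₂a₃),
C = a₁ − a₃, satisfies B² − 4AC = 4a₁a₃(a₂ − a₄)(a₁ + a₂ − a₃ − a₄) > 0. -/
theorem stmt_4 (a₁ a₂ a₃ a₄ A B C : ℝ) (h₁ : a₁ > a₃) (h₃ : a₃ > 0) (h₂ : a₂ > a₄)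
    (hA : A = (a₁ * a₄ ^ 2 - a₂ ^ 2 * a₃) + a₁ * a₃ * (a₄ - a₂))
    (hB : B = 2 * (a₁ * a₄ - a₂ * a₃)) (hC : C = a₁ - a₃) :
    B ^ 2 - 4 * A * C = 4 * a₁ * a₃ * (a₂ - a₄) * (a₁ + a₂ - a₃ - a₄) ∧
      B ^ 2 - 4 * A * C > 0 := by
  have hdiscrim : B ^ 2 - 4 * A * C = 4 * a₁ * a₃ * (a₂ - a₄) * (a₁ + a₂ - a₃ - a₄) := by
    subst hA hB hC
    exact discrim_eq_of_coeffs a₁ a₂ a₃ a₄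
  have ha₁ : 0 < a₁ := h₃.trans h₁
  have hgap₂ : 0 < a₂ - a₄ := sub_pos.mpr h₂
  have hsum : 0 < a₁ + a₂ - a₃ - a₄ := by linarith
  refine ⟨hdiscrim, hdiscrim ▸ ?_⟩
  exact mul_pos (mul_pos (mul_pos (mul_pos four_pos ha₁) h₃) hgap₂) hsum
end

section
/- The function f(x) = log₂((a₁g(x) + c·a₂)/(a₂g(x) + c·a₁)) with g(x) = √(Ps·x + N₀), c = √N₀, and constants a₁ > a₂ > 0, Ps > 0, N₀ > 0, is strictly monotonically increasing in x on [0, ∞). -/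
/-! The secrecy rate is `log₂ ∘ M ∘ g` with `M t = (a₁ t + c a₂) / (a₂ t + c a₁)` a Möbius map of
determinant `c (a₁² - a₂²) > 0`, so each of the three factors is strictly increasing where it is
applied. -/

open Set Real

theorem strictMonoOn_div_affine {a b c d : ℝ} (hdet : 0 < a * d - b * c) :
    StrictMonoOn (fun t => (a * t + b) / (c * t + d)) {t | 0 < c * t + d} := by
  intro s hs t ht hst
  rw [div_lt_div_iff₀ hs ht]
  -- the cross-multiplied difference is `(a d - b c) (t - s)`
  nlinarith [mul_pos hdet (sub_pos.mpr hst)]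

theorem strictMonoOn_sqrt_affine {p q : ℝ} (hp : 0 < p) (hq : 0 ≤ q) :
    StrictMonoOn (fun x => √(p * x + q)) (Ici 0) := by
  intro x hx y hy hxy
  have hx' : 0 ≤ p * x + q := by nlinarith [mem_Ici.mp hx]
  exact sqrt_lt_sqrt hx' (by nlinarith)

/-- f(x) = log₂((a₁g(x) + c·a₂)/(a₂g(x) + c·a₁)) with
g(x) = √(Ps·x + N₀), c = √N₀, a₁ > a₂ > 0, Ps > 0, N₀ > 0, is strictly
increasing on [0, ∞). -/
theorem stmt_9 (Ps N₀ a₁ a₂ c : ℝ) (hPs : 0 < Ps) (hN₀ : 0 < N₀)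
    (h₁₂ : a₁ > a₂) (h₂ : a₂ > 0) (hc : c = Real.sqrt N₀)
    (g f : ℝ → ℝ) (hg : ∀ x, g x = Real.sqrt (Ps * x + N₀))
    (hf : ∀ x, f x = Real.logb 2 ((a₁ * g x + c * a₂) / (a₂ * g x + c * a₁))) :
    StrictMonoOn f (Set.Ici 0) := by
  have hc₀ : 0 < c := hc ▸ sqrt_pos.mpr hN₀
  have h₁ : 0 < a₁ := h₂.trans h₁₂
  have hg_eq : g = fun x => √(Ps * x + N₀) := funext hg
  have hf_eq : f = logb 2 ∘ (fun t => (a₁ * t + c * a₂) / (a₂ * t + c * a₁)) ∘ g :=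
    funext hf
  have hg_nonneg : ∀ x, 0 ≤ g x := fun x => hg x ▸ sqrt_nonneg _
  have hM : StrictMonoOn (fun t => (a₁ * t + c * a₂) / (a₂ * t + c * a₁))
      {t | 0 < a₂ * t + c * a₁} :=
    strictMonoOn_div_affine (by nlinarith [mul_pos hc₀ (mul_pos (sub_pos.mpr h₁₂) (add_pos h₁ h₂))])
  rw [hf_eq]
  refine (strictMonoOn_logb one_lt_two).comp
    (hM.comp (hg_eq ▸ strictMonoOn_sqrt_affine hPs hN₀.le) fun x _ => ?_) fun x _ => ?_
  · show 0 < a₂ * g x + c * a₁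
    nlinarith [hg_nonneg x]
  · show 0 < (a₁ * g x + c * a₂) / (a₂ * g x + c * a₁)
    have := hg_nonneg x
    positivity
end
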